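/- arXiv:1708.03283 — 3 statements merged into one kernel-verified Lean document; each statement's English description precedes it below -/
import Mathlib

section
/- Let n ≥ 2 be even and let A be a persymmetric real symmetric tridiagonal n×n matrix with off-diagonal entries A_{j,j+1} = r_j > 0 and diagonal entries A_{j,j} = q_j. Let α_1 < α_2 < ... < α_n be the eigenvalues of A, and set S_1 = Σ_{r=1}^n (-1)^{r+n} α_r and S_2 = Σ_{r=1}^n (-1)^{r+n} α_r². Then r_{n/2} = S_1/2 and q_{n/2} = S_2/(2S_1). -/
/-!
Let `P k` be the characteristic polynomial of the leading `k × k` block. Expanding along the last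
row gives `P (k + 2) = (X - q (k + 2)) P (k + 1) - r (k + 1) ^ 2 P k`, and cutting the path at its
middle edge gives, for a mirror-symmetric path on `n = 2 m` vertices,
`P n = (P m - r m P (m - 1)) (P m + r m P (m - 1))`. Since the weights are positive, the roots of
consecutive `P k` strictly interlace (a Sturm-sequence argument with the intermediate value
theorem), and so do the roots of the two factors: the eigenvalues with odd index are the roots of
`P m + r m P (m - 1)`, those with even index the roots of `P m - r m P (m - 1)`. Hence `S₁` and `S₂`
are differences of power sums of the roots of the two factors, which Vieta's formulas read off
their top two coefficients: `S₁ = 2 r m` and `S₂ = 4 r m q m`.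
-/

open Matrix Polynomial

/-- The Hamiltonian (adjacency matrix with potentials) of a weighted path on `n`
vertices: tridiagonal, with diagonal entries `q 1, …, q n` (potentials) and
off-diagonal entries `r 1, …, r (n-1)` (edge weights); 1-based vertex labels. -/
noncomputable def pathHamiltonian (n : ℕ) (q r : ℕ → ℝ) : Matrix (Fin n) (Fin n) ℝ :=
  Matrix.of fun j k =>
    if (j : ℕ) = (k : ℕ) then q ((j : ℕ) + 1)
    else if (j : ℕ) + 1 = (k : ℕ) then r ((j : ℕ) + 1)
    else if (k : ℕ) + 1 = (j : ℕ) then r ((k : ℕ) + 1)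
    else 0

open Finset

section Tridiagonal

theorem Matrix.det_succ_succ_of_last_row_col {R : Type*} [CommRing R] {k : ℕ}
    (M : Matrix (Fin (k + 2)) (Fin (k + 2)) R)
    (hrow : ∀ j : Fin k, M (Fin.last _) j.castSucc.castSucc = 0)
    (hcol : ∀ i : Fin k, M i.castSucc.castSucc (Fin.last _) = 0) :
    M.det = M (Fin.last _) (Fin.last _) * (M.submatrix Fin.castSucc Fin.castSucc).det
      - M (Fin.last _) (Fin.last k).castSucc * M (Fin.last k).castSucc (Fin.last _)
        * (M.submatrix (Fin.castSucc ∘ Fin.castSucc) (Fin.castSucc ∘ Fin.castSucc)).det := by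
  have hcols : (Fin.last k).castSucc.succAbove ∘ Fin.castSucc = Fin.castSucc ∘ Fin.castSucc :=
    funext fun j => Fin.succAbove_of_castSucc_lt _ _
      (Fin.castSucc_lt_castSucc_iff.2 j.castSucc_lt_last)
  have hminor : (M.submatrix Fin.castSucc (Fin.last k).castSucc.succAbove).det
      = M (Fin.last k).castSucc (Fin.last _)
        * (M.submatrix (Fin.castSucc ∘ Fin.castSucc) (Fin.castSucc ∘ Fin.castSucc)).det := by
    rw [det_succ_column _ (Fin.last k), Fin.sum_univ_castSucc]
    simp [hcol, hcols]
  rw [det_succ_row M (Fin.last _), Fin.sum_univ_castSucc, Fin.sum_univ_castSucc]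
  simp [hrow, hminor]
  ring

theorem Matrix.charmatrix_submatrix {R m n : Type*} [CommRing R] [Fintype n] [DecidableEq n]
    [Fintype m] [DecidableEq m] (M : Matrix n n R) {e : m → n} (he : Function.Injective e) :
    charmatrix (M.submatrix e e) = (charmatrix M).submatrix e e := by
  ext i j : 1
  by_cases h : i = j
  · subst h; simp
  · simp [charmatrix_apply_ne _ _ _ h, charmatrix_apply_ne _ _ _ (he.ne h)]

end Tridiagonal

section PathHamiltonian

variable {n : ℕ} (q r : ℕ → ℝ)

theorem pathHamiltonian_apply_self (i : Fin n) : pathHamiltonian n q r i i = q (i + 1) := by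
  simp [pathHamiltonian]

theorem pathHamiltonian_apply_of_succ_eq {i j : Fin n} (h : (i : ℕ) + 1 = j) :
    pathHamiltonian n q r i j = r (i + 1) := by
  simp [pathHamiltonian, h]
  omega

theorem pathHamiltonian_apply_of_eq_succ {i j : Fin n} (h : (i : ℕ) = j + 1) :
    pathHamiltonian n q r i j = r (j + 1) := by
  simp [pathHamiltonian, h]
  omega

theorem pathHamiltonian_submatrix_castSucc :
    (pathHamiltonian (n + 1) q r).submatrix Fin.castSucc Fin.castSucc = pathHamiltonian n q r := by
  ext i j
  simp [pathHamiltonian]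

end PathHamiltonian

noncomputable def pathCharpoly (q r : ℕ → ℝ) : ℕ → ℝ[X]
  | 0 => 1
  | 1 => X - C (q 1)
  | k + 2 => (X - C (q (k + 2))) * pathCharpoly q r (k + 1) - C (r (k + 1)) ^ 2 * pathCharpoly q r k

section PathCharpoly

variable (q r : ℕ → ℝ)

theorem pathCharpoly_add_two (k : ℕ) : pathCharpoly q r (k + 2)
    = (X - C (q (k + 2))) * pathCharpoly q r (k + 1) - C (r (k + 1)) ^ 2 * pathCharpoly q r k :=
  rfl

theorem charpoly_pathHamiltonian : ∀ n, (pathHamiltonian n q r).charpoly = pathCharpoly q r n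
  | 0 => by simp [pathCharpoly]
  | 1 => by simp [charpoly, pathCharpoly, pathHamiltonian, det_unique]
  | k + 2 => by
    have h1 : (charmatrix (pathHamiltonian (k + 2) q r)).submatrix Fin.castSucc Fin.castSucc
        = charmatrix (pathHamiltonian (k + 1) q r) := by
      rw [← charmatrix_submatrix _ (Fin.castSucc_injective _), pathHamiltonian_submatrix_castSucc]
    have h2 : (charmatrix (pathHamiltonian (k + 2) q r)).submatrix
        (Fin.castSucc ∘ Fin.castSucc) (Fin.castSucc ∘ Fin.castSucc)
        = charmatrix (pathHamiltonian k q r) := by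
      rw [← submatrix_submatrix, h1, ← charmatrix_submatrix _ (Fin.castSucc_injective _),
        pathHamiltonian_submatrix_castSucc]
    rw [charpoly, det_succ_succ_of_last_row_col, h1, h2, ← charpoly, ← charpoly,
      charpoly_pathHamiltonian (k + 1), charpoly_pathHamiltonian k, charmatrix_apply_eq,
      charmatrix_apply_ne _ _ _ (by simp [Fin.ext_iff]),
      charmatrix_apply_ne _ _ _ (by simp [Fin.ext_iff])]
    · rw [pathHamiltonian_apply_self, pathHamiltonian_apply_of_eq_succ _ _ (by simp),
        pathHamiltonian_apply_of_succ_eq _ _ (by simp)]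
      simp [pathCharpoly_add_two, sq]
    all_goals
      intro i
      have := i.isLt
      rw [charmatrix_apply_ne _ _ _ (by simp [Fin.ext_iff]; omega)]
      simp only [pathHamiltonian, of_apply, neg_eq_zero, C_eq_zero, Fin.val_castSucc,
        Fin.val_last]
      split_ifs <;> first | rfl | omega

theorem monic_pathCharpoly (k : ℕ) : (pathCharpoly q r k).Monic := by
  rw [← charpoly_pathHamiltonian]
  exact charpoly_monic _

theorem natDegree_pathCharpoly (k : ℕ) : (pathCharpoly q r k).natDegree = k := by
  rw [← charpoly_pathHamiltonian, charpoly_natDegree_eq_dim, Fintype.card_fin]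

theorem coeff_X_mul_pathCharpoly (k : ℕ) :
    (X * pathCharpoly q r k).coeff k = -∑ j ∈ Icc 1 k, q j := by
  cases k with
  | zero => simp
  | succ k =>
    have h := trace_eq_neg_charpoly_coeff (pathHamiltonian (k + 1) q r)
    have htrace : trace (pathHamiltonian (k + 1) q r) = ∑ j ∈ Icc 1 (k + 1), q j := by
      simp only [trace, diag_apply, pathHamiltonian_apply_self]
      rw [Fin.sum_univ_eq_sum_range (fun i => q (i + 1)), range_eq_Ico, sum_Ico_add',
        zero_add, Ico_add_one_right_eq_Icc]
    rw [Fintype.card_fin, Nat.add_sub_cancel, charpoly_pathHamiltonian] at h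
    rw [coeff_X_mul]
    linarith

theorem pathCharpoly_congr {q' : ℕ → ℝ} : ∀ {k}, Set.EqOn q q' (Set.Icc 1 k) →
    pathCharpoly q r k = pathCharpoly q' r k
  | 0, _ => rfl
  | 1, h => by simp [pathCharpoly, h (show 1 ∈ Set.Icc 1 1 by simp)]
  | k + 2, h => by
    rw [pathCharpoly_add_two, pathCharpoly_add_two, h (show k + 2 ∈ Set.Icc 1 (k + 2) by simp),
      pathCharpoly_congr (h.mono (Set.Icc_subset_Icc_right (by omega))),
      pathCharpoly_congr (h.mono (Set.Icc_subset_Icc_right (by omega)))]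

theorem pathCharpoly_add (s : ℕ) : ∀ t, pathCharpoly q r (s + 1 + (t + 1))
    = pathCharpoly q r (s + 1)
        * pathCharpoly (fun j => q (s + 1 + j)) (fun j => r (s + 1 + j)) (t + 1)
      - C (r (s + 1)) ^ 2 * pathCharpoly q r s
        * pathCharpoly (fun j => q (s + 2 + j)) (fun j => r (s + 2 + j)) t
  | 0 => by simp [pathCharpoly]; ring
  | 1 => by simp [pathCharpoly]; ring
  | t + 2 => by
    rw [show s + 1 + (t + 2 + 1) = s + 1 + (t + 1) + 2 by omega, pathCharpoly_add_two,
      show s + 1 + (t + 1) + 1 = s + 1 + (t + 1 + 1) by omega, pathCharpoly_add s (t + 1),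
      pathCharpoly_add s t, pathCharpoly_add_two _ _ (t + 1),
      pathCharpoly_add_two (fun j => q (s + 2 + j)) (fun j => r (s + 2 + j)) t]
    ring_nf

/-- Reversing the vertex order turns the trailing block of length `k` into the leading one. -/
theorem pathCharpoly_shift_of_mirror {n : ℕ} (hq : ∀ i ∈ Icc 1 n, q i = q (n + 1 - i))
    (hr : ∀ i ∈ Icc 1 (n - 1), r i = r (n - i)) {s k : ℕ} (hsk : s + k = n) :
    pathCharpoly (fun j => q (s + j)) (fun j => r (s + j)) k = pathCharpoly q r k := by
  rw [← charpoly_pathHamiltonian, ← charpoly_pathHamiltonian, ← charpoly_reindex Fin.revPerm]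
  congr 1
  ext i j
  have hi := i.isLt
  have hj := j.isLt
  simp only [pathHamiltonian, reindex_apply, submatrix_apply, Fin.revPerm_symm, Fin.revPerm_apply,
    of_apply, Fin.val_rev]
  split_ifs <;> first
    | rfl
    | omega
    | (refine (hq _ ?_).trans (congrArg q ?_) <;> (try simp only [mem_Icc]) <;> omega)
    | (refine (hr _ ?_).trans (congrArg r ?_) <;> (try simp only [mem_Icc]) <;> omega)

theorem pathCharpoly_two_mul_of_mirror {m : ℕ} (hm : 1 ≤ m)
    (hq : ∀ i ∈ Icc 1 (2 * m), q i = q (2 * m + 1 - i))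
    (hr : ∀ i ∈ Icc 1 (2 * m - 1), r i = r (2 * m - i)) :
    pathCharpoly q r (2 * m) = (pathCharpoly q r m - C (r m) * pathCharpoly q r (m - 1))
      * (pathCharpoly q r m + C (r m) * pathCharpoly q r (m - 1)) := by
  obtain ⟨k, rfl⟩ : ∃ k, m = k + 1 := ⟨m - 1, by omega⟩
  rw [show 2 * (k + 1) = k + 1 + (k + 1) by ring, pathCharpoly_add,
    pathCharpoly_shift_of_mirror q r hq hr (by omega),
    pathCharpoly_shift_of_mirror q r hq hr (by omega), Nat.add_sub_cancel]
  ring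

theorem pathCharpoly_update_of_lt {m k : ℕ} (h : k < m) (x : ℝ) :
    pathCharpoly (Function.update q m x) r k = pathCharpoly q r k :=
  pathCharpoly_congr _ r fun j hj => Function.update_of_ne (by simp at hj; omega) _ _

theorem pathCharpoly_update_add {m : ℕ} (hm : 1 ≤ m) (t : ℝ) :
    pathCharpoly (Function.update q m (q m + t)) r m
      = pathCharpoly q r m - C t * pathCharpoly q r (m - 1) := by
  match m, hm with
  | 1, _ => simp [pathCharpoly]; ring
  | k + 2, _ =>
    rw [pathCharpoly_add_two, pathCharpoly_add_two, Function.update_self,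
      pathCharpoly_update_of_lt q r (by omega), pathCharpoly_update_of_lt q r (by omega),
      show k + 2 - 1 = k + 1 by omega, C_add]
    ring

end PathCharpoly

section Persymmetric

variable {n : ℕ} {q r : ℕ → ℝ}
  (hpersym : ∀ j k : Fin n, pathHamiltonian n q r j k = pathHamiltonian n q r k.rev j.rev)
include hpersym

theorem mirror_potential_of_persymm : ∀ i ∈ Icc 1 n, q i = q (n + 1 - i) := by
  intro i hi
  rw [mem_Icc] at hi
  have h := hpersym ⟨i - 1, by omega⟩ ⟨i - 1, by omega⟩
  rw [pathHamiltonian_apply_self, pathHamiltonian_apply_self] at h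
  convert h using 2 <;> simp <;> omega

theorem mirror_weight_of_persymm : ∀ i ∈ Icc 1 (n - 1), r i = r (n - i) := by
  intro i hi
  rw [mem_Icc] at hi
  have h := hpersym ⟨i - 1, by omega⟩ ⟨i, by omega⟩
  rw [pathHamiltonian_apply_of_succ_eq _ _ (by simp; omega),
    pathHamiltonian_apply_of_succ_eq _ _ (by simp; omega)] at h
  convert h using 2 <;> simp <;> omega

end Persymmetric

section RealRoots

theorem Polynomial.Monic.exists_gt_eval_pos {p : ℝ[X]} (hp : p.Monic) (a : ℝ) :
    ∃ b, a < b ∧ 0 < p.eval b := by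
  by_cases hdeg : p.natDegree = 0
  · rw [hp.natDegree_eq_zero.1 hdeg]
    exact ⟨a + 1, by linarith, by simp⟩
  have htop := tendsto_atTop_of_leadingCoeff_nonneg p
    (natDegree_pos_iff_degree_pos.1 (Nat.pos_of_ne_zero hdeg)) (by simp [hp.leadingCoeff])
  obtain ⟨b, hb, hab⟩ :=
    ((htop.eventually_gt_atTop 0).and (Filter.eventually_gt_atTop a)).exists
  exact ⟨b, hab, hb⟩

theorem Polynomial.Monic.exists_lt_neg_one_pow_mul_eval_pos {p : ℝ[X]} (hp : p.Monic) (a : ℝ) :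
    ∃ b, b < a ∧ 0 < (-1) ^ p.natDegree * p.eval b := by
  obtain ⟨b, hab, hb⟩ := hp.neg_one_pow_natDegree_mul_comp_neg_X.exists_gt_eval_pos (-a)
  refine ⟨-b, by linarith, ?_⟩
  simpa using hb

theorem exists_root_of_mul_eval_neg {p : ℝ[X]} {a b : ℝ} (hab : a < b)
    (h : p.eval a * p.eval b < 0) : ∃ z, a < z ∧ z < b ∧ p.IsRoot z := by
  have hcont := p.continuous.continuousOn (s := Set.Icc a b)
  rcases mul_neg_iff.1 h with ⟨ha, hb⟩ | ⟨ha, hb⟩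
  · obtain ⟨z, ⟨hz1, hz2⟩, hz⟩ := intermediate_value_Ioo' hab.le hcont ⟨hb, ha⟩
    exact ⟨z, hz1, hz2, hz⟩
  · obtain ⟨z, ⟨hz1, hz2⟩, hz⟩ := intermediate_value_Ioo hab.le hcont ⟨ha, hb⟩
    exact ⟨z, hz1, hz2, hz⟩

theorem Polynomial.Monic.eq_prod_X_sub_C_of_injOn {ι : Type*} {p : ℝ[X]} (hp : p.Monic)
    {s : Finset ι} (hdeg : p.natDegree = #s) {ξ : ι → ℝ} (hinj : Set.InjOn ξ s)
    (hroot : ∀ i ∈ s, p.IsRoot (ξ i)) : p = ∏ i ∈ s, (X - C (ξ i)) := by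
  have hnodup : (s.val.map ξ).Nodup :=
    Multiset.Nodup.map_on (fun _ hi _ hj => hinj hi hj) s.nodup
  have hle : s.val.map ξ ≤ p.roots := (Multiset.le_iff_subset hnodup).2 fun x hx => by
    obtain ⟨i, hi, rfl⟩ := Multiset.mem_map.1 hx
    exact (mem_roots hp.ne_zero).2 (hroot i hi)
  have hdvd := (Multiset.prod_X_sub_C_dvd_iff_le_roots hp.ne_zero _).2 hle
  rw [Multiset.map_map] at hdvd
  refine eq_of_monic_of_dvd_of_natDegree_le (monic_prod_of_monic _ _ fun i _ => monic_X_sub_C _)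
    hp hdvd ?_
  simp [hdeg]

theorem neg_one_pow_mul_prod_sub_pos {ν : ℕ → ℝ} {k c : ℕ} {x : ℝ} (hc : c ≤ k)
    (hlo : ∀ i ∈ Icc 1 c, ν i < x) (hhi : ∀ i ∈ Icc (c + 1) k, x < ν i) :
    0 < (-1) ^ (k - c) * ∏ i ∈ Icc 1 k, (x - ν i) := by
  have hunion : Icc 1 k = Icc 1 c ∪ Icc (c + 1) k := by
    ext i; simp only [mem_Icc, mem_union]; omega
  have hdisj : Disjoint (Icc 1 c) (Icc (c + 1) k) :=
    disjoint_left.2 fun i hi hi' => by simp only [mem_Icc] at hi hi'; omega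
  have hupper : (-1) ^ (k - c) * ∏ i ∈ Icc (c + 1) k, (x - ν i)
      = ∏ i ∈ Icc (c + 1) k, (ν i - x) := by
    rw [show k - c = #(Icc (c + 1) k) by simp, ← prod_neg]
    simp only [neg_sub]
  rw [hunion, prod_union hdisj, mul_left_comm, hupper]
  exact mul_pos (prod_pos fun i hi => sub_pos.2 (hlo i hi))
    (prod_pos fun i hi => sub_pos.2 (hhi i hi))

theorem Polynomial.Monic.exists_eq_prod_of_sign_changes {p : ℝ[X]} (hp : p.Monic) {N : ℕ}
    (hdeg : p.natDegree = N) {y : ℕ → ℝ} (hy : ∀ i ∈ Icc 1 N, y (i - 1) < y i)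
    (hsign : ∀ i ∈ Icc 0 N, 0 < (-1) ^ (N - i) * p.eval (y i)) :
    ∃ ξ : ℕ → ℝ, StrictMonoOn ξ (Set.Icc 1 N) ∧ p = ∏ i ∈ Icc 1 N, (X - C (ξ i)) ∧
      ∀ i ∈ Icc 1 N, y (i - 1) < ξ i ∧ ξ i < y i := by
  have hroot : ∀ i ∈ Icc 1 N, ∃ z, y (i - 1) < z ∧ z < y i ∧ p.IsRoot z := by
    intro i hi
    rw [mem_Icc] at hi
    refine exists_root_of_mul_eval_neg (hy i (mem_Icc.2 hi)) ?_
    have hprev := hsign (i - 1) (mem_Icc.2 ⟨by omega, by omega⟩)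
    have hcur := hsign i (mem_Icc.2 ⟨by omega, hi.2⟩)
    rw [show N - (i - 1) = N - i + 1 by omega, pow_succ] at hprev
    rcases neg_one_pow_eq_or ℝ (N - i) with h | h <;> rw [h] at hprev hcur <;> nlinarith
  choose! ξ hξ using hroot
  have hmono : StrictMonoOn ξ (Set.Icc 1 N) := by
    refine strictMonoOn_of_lt_add_one Set.ordConnected_Icc fun i _ hi hi' => ?_
    have h1 := (hξ i (by simpa using hi)).2.1
    have h2 := (hξ (i + 1) (by simpa using hi')).1
    rw [Nat.add_sub_cancel] at h2
    exact h1.trans h2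
  refine ⟨ξ, hmono, hp.eq_prod_X_sub_C_of_injOn (by simp [hdeg]) ?_ fun i hi => (hξ i hi).2.2,
    fun i hi => ⟨(hξ i hi).1, (hξ i hi).2.1⟩⟩
  rw [coe_Icc]
  exact hmono.injOn

theorem Polynomial.Monic.exists_roots_interlacing {p : ℝ[X]} (hp : p.Monic) {K N : ℕ}
    (hK : 1 ≤ K) (hKN : K ≤ N) (hNK : N ≤ K + 1) (hdeg : p.natDegree = N) {ν : ℕ → ℝ}
    (hν : StrictMonoOn ν (Set.Icc 1 K))
    (hsign : ∀ j ∈ Icc 1 K, 0 < (-1) ^ (N - j) * p.eval (ν j)) :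
    ∃ ξ : ℕ → ℝ, StrictMonoOn ξ (Set.Icc 1 N) ∧ p = ∏ i ∈ Icc 1 N, (X - C (ξ i)) ∧
      (∀ j ∈ Icc 1 K, ξ j < ν j) ∧ ∀ j ∈ Icc 1 (N - 1), ν j < ξ (j + 1) := by
  obtain ⟨a, ha, ha'⟩ := hp.exists_lt_neg_one_pow_mul_eval_pos (ν 1)
  obtain ⟨b, hb, hb'⟩ := hp.exists_gt_eval_pos (ν K)
  set y : ℕ → ℝ := fun i => if i = 0 then a else if i ≤ K then ν i else b
  have hy0 : y 0 = a := if_pos rfl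
  have hyν : ∀ j ∈ Icc 1 K, y j = ν j := fun j hj => by
    simp only [mem_Icc] at hj
    simp only [y, if_neg (show j ≠ 0 by omega), if_pos hj.2]
  have hyb : ∀ i, K < i → y i = b := fun i hi => by
    simp only [y, if_neg (show i ≠ 0 by omega), if_neg (show ¬i ≤ K by omega)]
  have hyinc : ∀ i ∈ Icc 1 N, y (i - 1) < y i := by
    intro i hi
    simp only [mem_Icc] at hi
    rcases Nat.lt_or_ge K i with hiK | hiK
    · rw [hyb i hiK, show i - 1 = K by omega, hyν K (by simp; omega)]
      exact hb
    obtain rfl | hi1 := eq_or_ne i 1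
    · rw [hy0, hyν 1 (by simp; omega)]
      exact ha
    rw [hyν i (by simp; omega), hyν (i - 1) (by simp; omega)]
    exact hν ⟨by omega, by omega⟩ ⟨by omega, hiK⟩ (by omega)
  have hysign : ∀ i ∈ Icc 0 N, 0 < (-1) ^ (N - i) * p.eval (y i) := by
    intro i hi
    simp only [mem_Icc] at hi
    rcases Nat.lt_or_ge K i with hiK | hiK
    · rw [hyb i hiK, show N - i = 0 by omega, pow_zero, one_mul]
      exact hb'
    obtain rfl | hi0 := eq_or_ne i 0
    · rwa [hy0, Nat.sub_zero, ← hdeg]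
    rw [hyν i (by simp; omega)]
    exact hsign i (by simp; omega)
  obtain ⟨ξ, hξ, hprod, hbetween⟩ := hp.exists_eq_prod_of_sign_changes hdeg hyinc hysign
  refine ⟨ξ, hξ, hprod, fun j hj => ?_, fun j hj => ?_⟩
  · simp only [mem_Icc] at hj
    rw [← hyν j (by simp; omega)]
    exact (hbetween j (by simp; omega)).2
  · simp only [mem_Icc] at hj
    rw [← hyν j (by simp; omega)]
    simpa using (hbetween (j + 1) (by simp; omega)).1

end RealRoots

section Interlacing

variable (q r : ℕ → ℝ)

theorem exists_interlacing_roots_pathCharpoly {k : ℕ} (hk : 1 ≤ k)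
    (hr : ∀ j ∈ Ico 1 k, 0 < r j) :
    ∃ ν : ℕ → ℝ, StrictMonoOn ν (Set.Icc 1 k) ∧
      pathCharpoly q r k = ∏ i ∈ Icc 1 k, (X - C (ν i)) ∧
      ∀ j ∈ Icc 1 k, 0 < (-1) ^ (k - j) * (pathCharpoly q r (k - 1)).eval (ν j) := by
  induction k, hk using Nat.le_induction with
  | base => exact ⟨fun _ => q 1, by simp, by simp [pathCharpoly], by simp [pathCharpoly]⟩
  | succ k hk ih =>
    obtain ⟨ν, hν, hprod, hsign⟩ := ih fun j hj => hr j (by simp at hj ⊢; omega)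
    obtain ⟨k, rfl⟩ : ∃ k', k = k' + 1 := ⟨k - 1, by omega⟩
    have hsign' : ∀ j ∈ Icc 1 (k + 1),
        0 < (-1) ^ (k + 2 - j) * (pathCharpoly q r (k + 2)).eval (ν j) := by
      intro j hj
      have hroot : (pathCharpoly q r (k + 1)).eval (ν j) = 0 := by
        rw [hprod, eval_prod]
        exact prod_eq_zero hj (by simp)
      have hrk : 0 < r (k + 1) := hr (k + 1) (by simp)
      rw [pathCharpoly_add_two, eval_sub, eval_mul, eval_mul, hroot,
        show k + 2 - j = k + 1 - j + 1 by simp at hj; omega, pow_succ]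
      have := hsign j hj
      simp only [eval_pow, eval_C, Nat.add_sub_cancel] at this ⊢
      nlinarith [mul_pos (pow_pos hrk 2) this]
    obtain ⟨ξ, hξ, hprodξ, hlt, hgt⟩ := (monic_pathCharpoly q r (k + 2)).exists_roots_interlacing
      (K := k + 1) (by omega) (by omega) (by omega) (natDegree_pathCharpoly q r _) hν hsign'
    refine ⟨ξ, hξ, hprodξ, fun j hj => ?_⟩
    simp only [mem_Icc] at hj
    rw [show k + 1 + 1 - 1 = k + 1 from rfl, hprod, eval_prod,
      show k + 1 + 1 - j = k + 1 - (j - 1) by omega]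
    simp only [eval_sub, eval_X, eval_C]
    refine neg_one_pow_mul_prod_sub_pos (by omega) (fun i hi => ?_) (fun i hi => ?_)
    · simp only [mem_Icc] at hi
      have := hgt (j - 1) (by simp; omega)
      rw [Nat.sub_add_cancel (by omega)] at this
      exact (hν.monotoneOn ⟨hi.1, by omega⟩ ⟨by omega, by omega⟩ hi.2).trans_lt this
    · simp only [mem_Icc] at hi
      exact (hlt j (by simp; omega)).trans_le
        (hν.monotoneOn ⟨by omega, by omega⟩ ⟨by omega, hi.2⟩ (by omega))

variable {m : ℕ}

theorem monic_pathCharpoly_add_C_mul (hm : 1 ≤ m) (c : ℝ) :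
    (pathCharpoly q r m + C c * pathCharpoly q r (m - 1)).Monic ∧
      (pathCharpoly q r m + C c * pathCharpoly q r (m - 1)).natDegree = m := by
  have hlt : (C c * pathCharpoly q r (m - 1)).degree < (pathCharpoly q r m).degree :=
    degree_lt_degree <| (natDegree_C_mul_le _ _).trans_lt <| by
      rw [natDegree_pathCharpoly, natDegree_pathCharpoly]; omega
  exact ⟨(monic_pathCharpoly q r m).add_of_left hlt,
    (natDegree_add_eq_left_of_degree_lt hlt).trans (natDegree_pathCharpoly q r m)⟩

/-- The first factor is the characteristic polynomial of the leading block with `q m` raised by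
`r m`, so its roots `γ` interlace with those of `pathCharpoly q r (m - 1)`; at `γ j` the second
factor equals `2 r m * pathCharpoly q r (m - 1)`, whose signs alternate, so its roots interlace
with `γ` in turn. -/
theorem exists_interlaced_roots_pathCharpoly_sub_add (hm : 1 ≤ m)
    (hr : ∀ j ∈ Icc 1 m, 0 < r j) :
    ∃ δ : ℕ → ℝ, StrictMonoOn δ (Set.Icc 1 (2 * m)) ∧
      pathCharpoly q r m - C (r m) * pathCharpoly q r (m - 1)
        = ∏ j ∈ Icc 1 m, (X - C (δ (2 * j))) ∧
      pathCharpoly q r m + C (r m) * pathCharpoly q r (m - 1)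
        = ∏ j ∈ Icc 1 m, (X - C (δ (2 * j - 1))) := by
  obtain ⟨γ, hγ, hprodγ, hsignγ⟩ := exists_interlacing_roots_pathCharpoly
    (Function.update q m (q m + r m)) r hm fun j hj => hr j (Ico_subset_Icc_self hj)
  rw [pathCharpoly_update_add q r hm] at hprodγ
  rw [pathCharpoly_update_of_lt q r (by omega)] at hsignγ
  have hsign : ∀ j ∈ Icc 1 m, 0 < (-1) ^ (m - j)
      * (pathCharpoly q r m + C (r m) * pathCharpoly q r (m - 1)).eval (γ j) := by
    intro j hj
    have hroot : (pathCharpoly q r m - C (r m) * pathCharpoly q r (m - 1)).eval (γ j) = 0 := by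
      rw [hprodγ, eval_prod]
      exact prod_eq_zero hj (by simp)
    have hrm : 0 < r m := hr m (by simp; omega)
    simp only [eval_add, eval_sub, eval_mul, eval_C] at hroot ⊢
    rw [show (pathCharpoly q r m).eval (γ j) = r m * (pathCharpoly q r (m - 1)).eval (γ j) by
      linarith]
    nlinarith [mul_pos hrm (hsignγ j hj)]
  obtain ⟨hmonic, hdeg⟩ := monic_pathCharpoly_add_C_mul q r hm (r m)
  obtain ⟨β, -, hprodβ, hlt, hgt⟩ :=
    hmonic.exists_roots_interlacing hm le_rfl (by omega) hdeg hγ hsign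
  set δ : ℕ → ℝ := fun i => if i % 2 = 0 then γ (i / 2) else β ((i + 1) / 2)
  have hδeven : ∀ j, δ (2 * j) = γ j := fun j => by simp [δ]
  have hδodd : ∀ j, 1 ≤ j → δ (2 * j - 1) = β j := fun j hj => by
    simp only [δ, if_neg (show (2 * j - 1) % 2 ≠ 0 by omega),
      show (2 * j - 1 + 1) / 2 = j by omega]
  refine ⟨δ, strictMonoOn_of_lt_add_one Set.ordConnected_Icc fun i _ hi hi' => ?_, ?_, ?_⟩
  · simp only [Set.mem_Icc] at hi hi'
    obtain ⟨j, rfl | rfl⟩ := Nat.even_or_odd' i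
    · rw [hδeven, show 2 * j + 1 = 2 * (j + 1) - 1 by omega, hδodd _ (by omega)]
      exact hgt j (by simp; omega)
    · rw [show 2 * j + 1 = 2 * (j + 1) - 1 by omega, hδodd _ (by omega),
        show 2 * (j + 1) - 1 + 1 = 2 * (j + 1) by omega, hδeven]
      exact hlt (j + 1) (by simp; omega)
  · rw [hprodγ]
    exact prod_congr rfl fun j _ => by rw [hδeven]
  · rw [hprodβ]
    exact prod_congr rfl fun j hj => by rw [hδodd j (mem_Icc.1 hj).1]

end Interlacing

section Vieta

variable {ι : Type*} (f : ι → ℝ)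

/-! Multiplying by `X` shifts the coefficient index by one, so that `#s - 1` and `#s - 2` never
truncate and the small cases `#s ≤ 1` need no separate treatment. -/

theorem coeff_X_mul_prod_X_sub_C (s : Finset ι) :
    (X * ∏ i ∈ s, (X - C (f i))).coeff #s = -∑ i ∈ s, f i := by
  rcases Nat.eq_zero_or_pos #s with hs | hs
  · simp [card_eq_zero.1 hs]
  · obtain ⟨k, hk⟩ : ∃ k, #s = k + 1 := ⟨#s - 1, by omega⟩
    rw [hk, coeff_X_mul, show k = #s - 1 by omega, prod_X_sub_C_coeff_card_pred s f hs]

theorem two_mul_coeff_X_mul_X_mul_prod_X_sub_C [DecidableEq ι] (s : Finset ι) :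
    2 * (X * (X * ∏ i ∈ s, (X - C (f i)))).coeff #s
      = (∑ i ∈ s, f i) ^ 2 - ∑ i ∈ s, f i ^ 2 := by
  induction s using Finset.induction_on with
  | empty => simp
  | insert a s ha ih =>
    rw [prod_insert ha, sum_insert ha, sum_insert ha, card_insert_of_notMem ha,
      show X * (X * ((X - C (f a)) * ∏ i ∈ s, (X - C (f i))))
        = X * (X * (X * ∏ i ∈ s, (X - C (f i))))
          - C (f a) * (X * (X * ∏ i ∈ s, (X - C (f i)))) by ring,
      coeff_sub, coeff_C_mul, coeff_X_mul, coeff_X_mul, coeff_X_mul_prod_X_sub_C]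
    linear_combination ih

end Vieta

theorem sums_of_roots_pathCharpoly_sub_add (q r : ℕ → ℝ) {m : ℕ} (hm : 1 ≤ m) {β γ : ℕ → ℝ}
    (hγ : pathCharpoly q r m - C (r m) * pathCharpoly q r (m - 1)
      = ∏ j ∈ Icc 1 m, (X - C (γ j)))
    (hβ : pathCharpoly q r m + C (r m) * pathCharpoly q r (m - 1)
      = ∏ j ∈ Icc 1 m, (X - C (β j))) :
    ∑ j ∈ Icc 1 m, γ j - ∑ j ∈ Icc 1 m, β j = 2 * r m ∧
      ∑ j ∈ Icc 1 m, γ j ^ 2 - ∑ j ∈ Icc 1 m, β j ^ 2 = 4 * r m * q m := by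
  obtain ⟨k, rfl⟩ : ∃ k, m = k + 1 := ⟨m - 1, by omega⟩
  rw [Nat.add_sub_cancel] at hγ hβ
  have hlead : (X * pathCharpoly q r k).coeff (k + 1) = 1 := by
    have h := (monic_pathCharpoly q r k).coeff_natDegree
    rwa [natDegree_pathCharpoly, ← coeff_X_mul] at h
  have hsub : (X * (X * pathCharpoly q r k)).coeff (k + 1) = -∑ j ∈ Icc 1 k, q j := by
    rw [coeff_X_mul, coeff_X_mul_pathCharpoly]
  have hγ1 := coeff_X_mul_prod_X_sub_C γ (Icc 1 (k + 1))
  have hβ1 := coeff_X_mul_prod_X_sub_C β (Icc 1 (k + 1))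
  have hγ2 := two_mul_coeff_X_mul_X_mul_prod_X_sub_C γ (Icc 1 (k + 1))
  have hβ2 := two_mul_coeff_X_mul_X_mul_prod_X_sub_C β (Icc 1 (k + 1))
  rw [Nat.card_Icc, Nat.add_sub_cancel, ← hγ] at hγ1 hγ2
  rw [Nat.card_Icc, Nat.add_sub_cancel, ← hβ] at hβ1 hβ2
  simp only [mul_sub, mul_add, coeff_add, coeff_sub, mul_left_comm _ (C (r (k + 1))), coeff_C_mul,
    hlead, hsub, coeff_X_mul_pathCharpoly] at hγ1 hβ1 hγ2 hβ2
  have hq := sum_Icc_succ_top (show 1 ≤ k + 1 by omega) q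
  have hSγ : ∑ j ∈ Icc 1 (k + 1), γ j = ∑ j ∈ Icc 1 (k + 1), q j + r (k + 1) := by linarith
  have hSβ : ∑ j ∈ Icc 1 (k + 1), β j = ∑ j ∈ Icc 1 (k + 1), q j - r (k + 1) := by linarith
  refine ⟨by rw [hSγ, hSβ]; ring, ?_⟩
  rw [hSγ, hq] at hγ2
  rw [hSβ, hq] at hβ2
  linear_combination hγ2 - hβ2

section SortedRoots

@[to_additive]
theorem prod_Icc_double {M : Type*} [CommMonoid M] (f : ℕ → M) (m : ℕ) :
    ∏ i ∈ Icc 1 (2 * m), f i = ∏ j ∈ Icc 1 m, f (2 * j - 1) * f (2 * j) := by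
  induction m with
  | zero => simp
  | succ m ih =>
    rw [show 2 * (m + 1) = 2 * m + 1 + 1 by ring, prod_Icc_succ_top (by omega),
      prod_Icc_succ_top (by omega), ih, prod_Icc_succ_top (by omega),
      show 2 * (m + 1) - 1 = 2 * m + 1 by omega, show 2 * (m + 1) = 2 * m + 1 + 1 by ring,
      mul_assoc]

theorem sum_Icc_double_neg_one_pow_mul (f : ℕ → ℝ) (m : ℕ) :
    ∑ i ∈ Icc 1 (2 * m), (-1 : ℝ) ^ (i + 2 * m) * f i
      = ∑ j ∈ Icc 1 m, f (2 * j) - ∑ j ∈ Icc 1 m, f (2 * j - 1) := by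
  rw [sum_Icc_double, ← sum_sub_distrib]
  refine sum_congr rfl fun j hj => ?_
  have hj := (mem_Icc.1 hj).1
  rw [Odd.neg_one_pow ⟨j + m - 1, by omega⟩, Even.neg_one_pow ⟨j + m, by omega⟩]
  ring

theorem le_of_prod_X_sub_C_eq {N : ℕ} {ξ α : ℕ → ℝ} (hα : MonotoneOn α (Set.Icc 1 N))
    (h : ∏ i ∈ Icc 1 N, (X - C (ξ i)) = ∏ i ∈ Icc 1 N, (X - C (α i))) (hN : 1 ≤ N) :
    ξ N ≤ α N := by
  have hroot : (∏ i ∈ Icc 1 N, (X - C (α i))).eval (ξ N) = 0 := by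
    rw [← h, eval_prod]
    exact prod_eq_zero (mem_Icc.2 ⟨hN, le_rfl⟩) (by simp)
  rw [eval_prod, prod_eq_zero_iff] at hroot
  obtain ⟨i, hi, hroot⟩ := hroot
  rw [mem_Icc] at hi
  simp only [eval_sub, eval_X, eval_C, sub_eq_zero] at hroot
  rw [hroot]
  exact hα ⟨hi.1, hi.2⟩ ⟨hN, le_rfl⟩ hi.2

theorem eqOn_of_prod_X_sub_C_eq {ξ α : ℕ → ℝ} : ∀ {N : ℕ},
    StrictMonoOn ξ (Set.Icc 1 N) → StrictMonoOn α (Set.Icc 1 N) →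
    ∏ i ∈ Icc 1 N, (X - C (ξ i)) = ∏ i ∈ Icc 1 N, (X - C (α i)) → Set.EqOn ξ α (Set.Icc 1 N)
  | 0, _, _, _ => fun i hi => by simp at hi
  | N + 1, hξ, hα, h => by
    have htop : ξ (N + 1) = α (N + 1) :=
      (le_of_prod_X_sub_C_eq hα.monotoneOn h (by omega)).antisymm
        (le_of_prod_X_sub_C_eq hξ.monotoneOn h.symm (by omega))
    have hrest : ∏ i ∈ Icc 1 N, (X - C (ξ i)) = ∏ i ∈ Icc 1 N, (X - C (α i)) := by
      rw [prod_Icc_succ_top (by omega), prod_Icc_succ_top (by omega), htop] at h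
      exact mul_right_cancel₀ (X_sub_C_ne_zero _) h
    have hsub : Set.Icc 1 N ⊆ Set.Icc 1 (N + 1) := Set.Icc_subset_Icc_right (by omega)
    intro i hi
    rcases eq_or_ne i (N + 1) with rfl | hiN
    · exact htop
    · exact eqOn_of_prod_X_sub_C_eq (hξ.mono hsub) (hα.mono hsub) hrest
        ⟨hi.1, by have := hi.2; omega⟩

end SortedRoots

/-- For `n` even, a persymmetric weighted path Hamiltonian with eigenvalues
`α 1 < ⋯ < α n` satisfies `r (n/2) = S₁/2` and `q (n/2) = S₂/(2 S₁)`, where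
`S₁ = ∑ (-1)^(r+n) α r` and `S₂ = ∑ (-1)^(r+n) (α r)^2`. -/
theorem middle_entries_even (n : ℕ) (hn : 2 ≤ n) (heven : Even n) (q r : ℕ → ℝ)
    (hr : ∀ j, 1 ≤ j → j ≤ n - 1 → 0 < r j)
    (hpersym : ∀ j k : Fin n,
      pathHamiltonian n q r j k = pathHamiltonian n q r k.rev j.rev)
    (α : ℕ → ℝ) (hα : StrictMonoOn α (Set.Icc 1 n))
    (hchar : (pathHamiltonian n q r).charpoly = ∏ i ∈ Finset.Icc 1 n, (X - C (α i)))
    (S₁ S₂ : ℝ)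
    (hS₁ : S₁ = ∑ i ∈ Finset.Icc 1 n, (-1 : ℝ) ^ (i + n) * α i)
    (hS₂ : S₂ = ∑ i ∈ Finset.Icc 1 n, (-1 : ℝ) ^ (i + n) * (α i) ^ 2) :
    r (n / 2) = S₁ / 2 ∧ q (n / 2) = S₂ / (2 * S₁) := by
  obtain ⟨m, hnm⟩ := heven
  obtain rfl : n = 2 * m := by omega
  have hm : 1 ≤ m := by omega
  obtain ⟨δ, hδ, hγ, hβ⟩ := exists_interlaced_roots_pathCharpoly_sub_add q r hm
    fun j hj => hr j (mem_Icc.1 hj).1 (by have := (mem_Icc.1 hj).2; omega)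
  have hδα : Set.EqOn δ α (Set.Icc 1 (2 * m)) := by
    refine eqOn_of_prod_X_sub_C_eq hδ hα ?_
    rw [← hchar, charpoly_pathHamiltonian, pathCharpoly_two_mul_of_mirror q r hm
      (mirror_potential_of_persymm hpersym) (mirror_weight_of_persymm hpersym), hγ, hβ,
      prod_Icc_double, ← prod_mul_distrib]
    exact prod_congr rfl fun _ _ => mul_comm _ _
  rw [prod_congr rfl fun j hj => by rw [hδα (by simp at hj ⊢; omega)]] at hγ hβ
  obtain ⟨h₁, h₂⟩ := sums_of_roots_pathCharpoly_sub_add q r hm hγ hβ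
  rw [sum_Icc_double_neg_one_pow_mul] at hS₁
  rw [sum_Icc_double_neg_one_pow_mul (fun i => α i ^ 2)] at hS₂
  have hrm : 0 < r m := hr m hm (by omega)
  rw [Nat.mul_div_cancel_left m two_pos, hS₁, hS₂, h₁, h₂]
  constructor
  · ring
  · field_simp
    ring
end

section
/- Let m ≥ 1, let E and C be arbitrary m×m real matrices, let q be a real number, let x ∈ ℝ^m, and let R be the m×m reversal matrix. Then the (2m+1)×(2m+1) block matrix B = [[E, x, RCR], [xᵀ, q, xᵀR], [C, Rx, RER]] is orthogonally similar to the block diagonal matrix [[E - RC, 0, 0], [0, q, √2·xᵀ], [0, √2·x, E + RC]]; that is, there exists a real orthogonal (2m+1)×(2m+1) matrix U conjugating the former to the latter. -/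
open Matrix

/-!
Conjugating by `diag(I, 1, R)` turns the matrix into the symmetric block form
`[[E, x, D], [xᵀ, q, xᵀ], [D, x, E]]` with `D = RC`. The orthogonal matrix whose columns are
`(e_k - e'_k)/√2`, the middle basis vector and `(e_k + e'_k)/√2` (with `e'_k` the copy of `e_k`
in the last block) then separates the odd part `E - D` from the even part, on which the middle
row and column pick up the factor `√2`.
-/

/-- The `m × m` reversal matrix: ones on the antidiagonal, zeros elsewhere. -/
noncomputable def reversal (m : ℕ) : Matrix (Fin m) (Fin m) ℝ :=
  Matrix.of fun j k => if (j : ℕ) + (k : ℕ) = m - 1 then 1 else 0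

lemma reversal_eq_permMatrix (m : ℕ) : reversal m = Fin.revPerm.permMatrix ℝ := by
  ext j k
  have h : (j : ℕ) + k = m - 1 ↔ m - (j + 1) = k := by omega
  simp [reversal, PEquiv.toMatrix_apply, Fin.ext_iff, h]

lemma reversal_transpose (m : ℕ) : (reversal m)ᵀ = reversal m := by
  rw [reversal_eq_permMatrix, transpose_permMatrix]
  rfl

lemma reversal_mul_reversal (m : ℕ) : reversal m * reversal m = 1 := by
  rw [reversal_eq_permMatrix, ← permMatrix_mul, ← permMatrix_one]
  congr 1
  ext i
  simp

section BlockConjugation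

variable {n o α : Type*} [Fintype n] [Fintype o] [DecidableEq n] [DecidableEq o]

lemma transpose_mul_conj {ι : Type*} [Fintype ι] [CommSemiring α] (P H B : Matrix ι ι α) :
    (P * H)ᵀ * B * (P * H) = Hᵀ * (Pᵀ * B * P) * H := by
  simp only [transpose_mul, Matrix.mul_assoc]

variable (o) in
def flipLastBlock [Zero α] [One α] (R : Matrix n n α) : Matrix (n ⊕ (o ⊕ n)) (n ⊕ (o ⊕ n)) α :=
  fromBlocks 1 0 0 (fromBlocks 1 0 0 R)

variable [CommSemiring α] {R : Matrix n n α}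

lemma flipLastBlock_transpose_mul_self (hRt : Rᵀ = R) (hRR : R * R = 1) :
    (flipLastBlock o R)ᵀ * flipLastBlock o R = 1 := by
  simp [flipLastBlock, fromBlocks_transpose, fromBlocks_multiply, hRt, hRR]

lemma flipLastBlock_conj (hRt : Rᵀ = R) (hRR : R * R = 1) (E C : Matrix n n α)
    (X : Matrix n o α) (Y : Matrix o n α) (Q : Matrix o o α) :
    (flipLastBlock o R)ᵀ *
        fromBlocks E (fromCols X (R * C * R)) (fromRows Y C)
          (fromBlocks Q (Y * R) (R * X) (R * E * R)) *
        flipLastBlock o R =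
      fromBlocks E (fromCols X (R * C)) (fromRows Y (R * C)) (fromBlocks Q Y X E) := by
  simp only [flipLastBlock, fromBlocks_transpose, transpose_one, transpose_zero, hRt,
    Matrix.mul_assoc, fromBlocks_multiply, fromBlocks_mul_fromRows, fromCols_mul_fromBlocks,
    Matrix.one_mul, Matrix.mul_one, Matrix.zero_mul, Matrix.mul_zero, add_zero, zero_add, hRR,
    fromBlocks_inj, true_and]
  simp [← Matrix.mul_assoc, hRR]

variable (n o) in
noncomputable def evenOddBasis : Matrix (n ⊕ (o ⊕ n)) (n ⊕ (o ⊕ n)) ℝ :=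
  fromBlocks ((√2)⁻¹ • 1) (fromCols 0 ((√2)⁻¹ • 1)) (fromRows 0 (-(√2)⁻¹ • 1))
    (fromBlocks 1 0 0 ((√2)⁻¹ • 1))

lemma evenOddBasis_transpose_mul_self : (evenOddBasis n o)ᵀ * evenOddBasis n o = 1 := by
  ext (i | i | i) (j | j | j) <;>
    simp [evenOddBasis, mul_apply, Fintype.sum_sum_type, one_apply, eq_comm] <;>
    split_ifs <;> ring_nf <;> norm_num

lemma evenOddBasis_conj (E D : Matrix n n ℝ) (X : Matrix n o ℝ) (Y : Matrix o n ℝ)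
    (Q : Matrix o o ℝ) :
    (evenOddBasis n o)ᵀ * fromBlocks E (fromCols X D) (fromRows Y D) (fromBlocks Q Y X E) *
        evenOddBasis n o =
      fromBlocks (E - D) 0 0 (fromBlocks Q (√2 • Y) (√2 • X) (E + D)) := by
  ext (i | i | i) (j | j | j) <;>
    simp [evenOddBasis, mul_apply, Fintype.sum_sum_type, one_apply] <;>
    field_simp <;> ring_nf <;> norm_num

end BlockConjugation

theorem cantoni_butler_odd_general (m : ℕ) (E C : Matrix (Fin m) (Fin m) ℝ)
    (q : ℝ) (x : Fin m → ℝ) :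
    ∃ U : Matrix (Fin m ⊕ (Fin 1 ⊕ Fin m)) (Fin m ⊕ (Fin 1 ⊕ Fin m)) ℝ,
      Uᵀ * U = 1 ∧
      Uᵀ *
        (Matrix.fromBlocks E
          (Matrix.fromCols (Matrix.replicateCol (Fin 1) x) (reversal m * C * reversal m))
          (Matrix.fromRows (Matrix.replicateRow (Fin 1) x) C)
          (Matrix.fromBlocks (q • (1 : Matrix (Fin 1) (Fin 1) ℝ))
            (Matrix.replicateRow (Fin 1) x * reversal m)
            (reversal m * Matrix.replicateCol (Fin 1) x)
            (reversal m * E * reversal m))) * U =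
      Matrix.fromBlocks (E - reversal m * C) 0 0
        (Matrix.fromBlocks (q • (1 : Matrix (Fin 1) (Fin 1) ℝ))
          (Real.sqrt 2 • Matrix.replicateRow (Fin 1) x)
          (Real.sqrt 2 • Matrix.replicateCol (Fin 1) x)
          (E + reversal m * C)) := by
  have hRt := reversal_transpose m
  have hRR := reversal_mul_reversal m
  set P := flipLastBlock (Fin 1) (reversal m)
  set H := evenOddBasis (Fin m) (Fin 1)
  refine ⟨P * H, ?_, ?_⟩
  · rw [← Matrix.mul_one (P * H)ᵀ, transpose_mul_conj, Matrix.mul_one,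
      flipLastBlock_transpose_mul_self hRt hRR, Matrix.mul_one, evenOddBasis_transpose_mul_self]
  · rw [transpose_mul_conj, flipLastBlock_conj hRt hRR, evenOddBasis_conj]

/-- The block matrix `[[E, x, RCR], [xᵀ, q, xᵀR], [C, Rx, RER]]` is orthogonally
similar to `[[E - RC, 0, 0], [0, q, √2 xᵀ], [0, √2 x, E + RC]]`. -/
theorem cantoni_butler_odd (m : ℕ) (hm : 1 ≤ m) (E C : Matrix (Fin m) (Fin m) ℝ)
    (q : ℝ) (x : Fin m → ℝ) :
    ∃ U : Matrix (Fin m ⊕ (Fin 1 ⊕ Fin m)) (Fin m ⊕ (Fin 1 ⊕ Fin m)) ℝ,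
      Uᵀ * U = 1 ∧
      Uᵀ *
        (Matrix.fromBlocks E
          (Matrix.fromCols (Matrix.replicateCol (Fin 1) x) (reversal m * C * reversal m))
          (Matrix.fromRows (Matrix.replicateRow (Fin 1) x) C)
          (Matrix.fromBlocks (q • (1 : Matrix (Fin 1) (Fin 1) ℝ))
            (Matrix.replicateRow (Fin 1) x * reversal m)
            (reversal m * Matrix.replicateCol (Fin 1) x)
            (reversal m * E * reversal m))) * U =
      Matrix.fromBlocks (E - reversal m * C) 0 0
        (Matrix.fromBlocks (q • (1 : Matrix (Fin 1) (Fin 1) ℝ))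
          (Real.sqrt 2 • Matrix.replicateRow (Fin 1) x)
          (Real.sqrt 2 • Matrix.replicateCol (Fin 1) x)
          (E + reversal m * C)) :=
  cantoni_butler_odd_general m E C q x
end

section
/- Let A be the Hamiltonian of a weighted path on 4 vertices with potentials, i.e., a real symmetric tridiagonal 4×4 matrix with off-diagonal entries r_1, r_2, r_3 > 0 and diagonal entries q_1, q_2, q_3, q_4. If all of r_1, r_2, r_3, q_1, q_2, q_3, q_4 are rational numbers, then there is no perfect state transfer from vertex 1 to vertex 4 at time π, i.e., |(e^{iπA})_{1,4}| < 1. -/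
open Matrix

/-- `|(e^{itH})_{j,k}|` for a real symmetric Hamiltonian `H`. -/
noncomputable def transferAmp (n : ℕ) (H : Matrix (Fin n) (Fin n) ℝ) (t : ℝ) (j k : Fin n) : ℝ :=
  ‖(NormedSpace.exp ((Complex.I * (t : ℂ)) • H.map (fun x => (x : ℂ))) j k)‖

/-! If `|U₀₃| = 1` for the unitary, symmetric `U = exp(iπA)`, then, since `U` commutes with `A`,
the rows of `U` are forced one by one: `U = γ J` with `J` the reversal, and `A` is
persymmetric. The eigenvectors of a persymmetric `A` are symmetric, with eigenvalues the roots
`μ₁, μ₂` of `(x - q₁)(x - q₂ - r₂) = r₁²`, or antisymmetric, with eigenvalues the roots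
`ν₁, ν₂` of `(x - q₁)(x - q₂ + r₂) = r₁²`; `U = γ J` gives `e^{iπμⱼ} = γ` and `e^{iπνⱼ} = -γ`.
Hence `μ₁ - μ₂ = 2n`, `ν₁ - ν₂ = 2k` and `μ₁ - ν₁` is odd, which makes `r₂` an integer and
`x = (q₁ - q₂ - r₂)/2` a rational with `x² + r₁² = n²` and `(x + r₂)² + r₁² = k²`.
If `x² + y²` is an integer for rationals `x, y`, then `x` has odd denominator; so
`k² - n² - r₂² = 2 r₂ x` is even, which contradicts the parity of `r₂ + n - k`.
-/

open Complex

theorem Int.even_of_four_dvd_sq_add_sq {a b : ℤ} (h : 4 ∣ a ^ 2 + b ^ 2) : Even a := by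
  by_contra ha
  have ha2 := Int.sq_mod_four_eq_one_of_odd (Int.not_even_iff_odd.mp ha)
  rcases Int.even_or_odd b with ⟨c, rfl⟩ | hb
  · have : (c + c) ^ 2 = 4 * c ^ 2 := by ring
    omega
  · have := Int.sq_mod_four_eq_one_of_odd hb
    omega

theorem Rat.den_dvd_den_of_sq_add_sq_eq_intCast {x y : ℚ} {n : ℤ} (h : x ^ 2 + y ^ 2 = n) :
    x.den ∣ y.den := by
  have hxy : x.num ^ 2 * (y.den : ℤ) ^ 2 + y.num ^ 2 * (x.den : ℤ) ^ 2 =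
      n * (x.den : ℤ) ^ 2 * (y.den : ℤ) ^ 2 := by
    rw [← Rat.num_div_den x, ← Rat.num_div_den y] at h
    field_simp at h
    qify
    linear_combination h
  have hcop : IsCoprime ((x.den : ℤ) ^ 2) (x.num ^ 2) :=
    (Int.isCoprime_iff_gcd_eq_one.mpr (by simpa [Int.gcd] using x.reduced.symm)).pow
  have hdvd : (x.den : ℤ) ^ 2 ∣ (y.den : ℤ) ^ 2 * x.num ^ 2 :=
    ⟨n * (y.den : ℤ) ^ 2 - y.num ^ 2, by linear_combination hxy⟩
  exact Int.natCast_dvd_natCast.mp ((Int.pow_dvd_pow_iff two_ne_zero).mp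
    (hcop.dvd_of_dvd_mul_right hdvd))

theorem Rat.odd_den_of_sq_add_sq_eq_intCast {x y : ℚ} {n : ℤ} (h : x ^ 2 + y ^ 2 = n) :
    Odd x.den := by
  have hden : x.den = y.den := Nat.dvd_antisymm (den_dvd_den_of_sq_add_sq_eq_intCast h)
    (den_dvd_den_of_sq_add_sq_eq_intCast (y := x) (by rw [add_comm, h]))
  have hnum : x.num ^ 2 + y.num ^ 2 = n * (x.den : ℤ) ^ 2 := by
    rw [← Rat.num_div_den x, ← Rat.num_div_den y, ← hden] at h
    field_simp at h
    qify
    linear_combination h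
  by_contra hodd
  obtain ⟨m, hm⟩ := Nat.not_odd_iff_even.mp hodd
  have h2num : ((2 : ℕ) : ℤ) ∣ x.num := even_iff_two_dvd.mp
    (Int.even_of_four_dvd_sq_add_sq ⟨n * m ^ 2, by rw [hnum, hm]; push_cast; ring⟩)
  have := Nat.dvd_gcd (Int.ofNat_dvd_left.mp h2num) (⟨m, by omega⟩ : 2 ∣ x.den)
  rw [x.reduced] at this
  omega

theorem Int.even_add_add_of_sq_add_sq {u y : ℚ} {d n k : ℤ}
    (hn : ((u - d) / 2) ^ 2 + y ^ 2 = n ^ 2) (hk : ((u + d) / 2) ^ 2 + y ^ 2 = k ^ 2) :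
    Even (d + n + k) := by
  set x := (u - d) / 2
  have hden : Odd x.den :=
    Rat.odd_den_of_sq_add_sq_eq_intCast (n := n ^ 2) (by rw [hn]; push_cast; ring)
  -- `k² - n² - d² = 2 d x`, and `x` has odd denominator.
  have h2 : 2 ∣ (k ^ 2 - n ^ 2 - d ^ 2) * (x.den : ℤ) := by
    refine ⟨d * x.num, ?_⟩
    qify
    rw [← Rat.mul_den_eq_num x]
    linear_combination (x.den : ℚ) * (hn - hk)
  have hN : Even (k ^ 2 - n ^ 2 - d ^ 2) := even_iff_two_dvd.mpr
    ((Int.prime_two.dvd_mul.mp h2).resolve_right (by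
      rw [← even_iff_two_dvd, Int.not_even_iff_odd]; exact_mod_cast hden))
  simp only [Int.even_sub, Int.even_add, Int.even_pow' two_ne_zero] at hN ⊢
  tauto

section Unitary

variable {𝕜 n : Type*} [RCLike 𝕜] [Fintype n] [DecidableEq n]

theorem Matrix.sum_norm_sq_row_eq_one {U : Matrix n n 𝕜} (hU : U ∈ unitaryGroup n 𝕜)
    (i : n) :
    ∑ k, ‖U i k‖ ^ 2 = 1 := by
  have h := congrFun (congrFun (mem_unitaryGroup_iff.mp hU) i) i
  simp only [mul_apply, star_eq_conjTranspose, conjTranspose_apply, ← starRingEnd_apply,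
    RCLike.mul_conj, one_apply_eq] at h
  exact_mod_cast h

theorem Matrix.row_eq_single_of_norm_eq_one {U : Matrix n n 𝕜} (hU : U ∈ unitaryGroup n 𝕜)
    {i j : n} (h : ‖U i j‖ = 1) : U i = Pi.single j (U i j) := by
  have hrest : ∑ k ∈ Finset.univ.erase j, ‖U i k‖ ^ 2 = 0 := by
    have := Finset.add_sum_erase _ (fun k => ‖U i k‖ ^ 2) (Finset.mem_univ j)
    rw [sum_norm_sq_row_eq_one hU, h] at this
    linarith
  ext k
  rcases eq_or_ne k j with rfl | hk
  · simp
  · rw [Finset.sum_eq_zero_iff_of_nonneg (fun _ _ => by positivity)] at hrest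
    simpa [hk] using hrest k (by simp [hk])

theorem Matrix.IsSymm.rows_eq_single_of_norm_eq_one {U : Matrix n n 𝕜}
    (hU : U ∈ unitaryGroup n 𝕜) (hUs : U.IsSymm) {i j : n} (h : ‖U i j‖ = 1) :
    U i = Pi.single j (U i j) ∧ U j = Pi.single i (U i j) := by
  refine ⟨row_eq_single_of_norm_eq_one hU h, ?_⟩
  rw [← hUs.apply]
  exact row_eq_single_of_norm_eq_one hU (by rwa [hUs.apply])

end Unitary

theorem Matrix.exp_I_mul_smul_mem_unitaryGroup {n : Type*} [Fintype n] [DecidableEq n]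
    {A : Matrix n n ℂ} (hA : A.IsHermitian) (t : ℝ) :
    NormedSpace.exp ((I * t) • A) ∈ unitaryGroup n ℂ := by
  have hskew : ((I * t) • A)ᴴ = -((I * t) • A) := by
    rw [conjTranspose_smul, hA.eq, ← neg_smul]
    simp
  rw [mem_unitaryGroup_iff', star_eq_conjTranspose, ← exp_conjTranspose, hskew,
    ← exp_add_of_commute _ _ (Commute.refl ((I * t) • A)).neg_left, neg_add_cancel,
    NormedSpace.exp_zero]

theorem Matrix.exp_mulVec_of_mulVec_eq_smul {𝕂 n : Type*} [RCLike 𝕂] [Fintype n]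
    [DecidableEq n] {M : Matrix n n 𝕂} {v : n → 𝕂} {μ : 𝕂} (h : M *ᵥ v = μ • v) :
    NormedSpace.exp M *ᵥ v = NormedSpace.exp μ • v := by
  open scoped Matrix.Norms.Operator in
  have hV : SemiconjBy (replicateCol n v) (algebraMap 𝕂 _ μ) M := by
    rw [SemiconjBy, ← replicateCol_mulVec, h, Algebra.algebraMap_eq_smul_one, mul_smul_comm,
      mul_one, replicateCol_smul]
  open scoped Matrix.Norms.Operator in
  have key := hV.exp_right
  rw [SemiconjBy, ← NormedSpace.algebraMap_exp_comm, ← replicateCol_mulVec,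
    Algebra.algebraMap_eq_smul_one, mul_smul_comm, mul_one, ← replicateCol_smul] at key
  ext i
  exact (congrFun (congrFun key i) i).symm

theorem Complex.exp_eq_of_mulVec_eq_smul_of_rows_eq_single_rev {n : ℕ}
    {M : Matrix (Fin n) (Fin n) ℂ} {γ μ ε : ℂ} {v : Fin n → ℂ}
    (hM : ∀ i, NormedSpace.exp M i = Pi.single i.rev γ) (hv : M *ᵥ v = μ • v)
    (hrev : v ∘ Fin.rev = ε • v) (hv₀ : v ≠ 0) : Complex.exp μ = ε * γ := by
  have hexp := exp_mulVec_of_mulVec_eq_smul hv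
  have hflip : NormedSpace.exp M *ᵥ v = (ε * γ) • v := by
    ext i
    have := congrFun hrev i
    simp only [Function.comp_apply, Pi.smul_apply, smul_eq_mul] at this
    simp [mulVec, hM, this, mul_comm, mul_left_comm]
  rw [Complex.exp_eq_exp_ℂ]
  exact smul_left_injective ℂ hv₀ (hexp.symm.trans hflip)

theorem persymmetric_mulVec_eigenvector {a b c d ε μ : ℂ} (hε : ε ^ 2 = 1)
    (hμ : (μ - a) * (μ - (b + ε * d)) = c ^ 2) :
    !![a, c, 0, 0; c, b, d, 0; 0, d, b, c; 0, 0, c, a] *ᵥ ![c, μ - a, ε * (μ - a), ε * c] =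
      μ • ![c, μ - a, ε * (μ - a), ε * c] := by
  ext i
  fin_cases i <;> simp [mulVec, dotProduct, Fin.sum_univ_four]
  · ring
  · linear_combination -hμ
  · linear_combination (-ε) * hμ - (μ - a) * d * hε
  · ring

theorem Complex.exists_int_of_exp_I_pi_mul_eq {x y : ℝ}
    (h : cexp (I * Real.pi * x) = cexp (I * Real.pi * y)) : ∃ n : ℤ, x = y + 2 * n := by
  obtain ⟨n, hn⟩ := exp_eq_exp_iff_exists_int.mp h
  have hIπ : I * Real.pi ≠ 0 := mul_ne_zero I_ne_zero (ofReal_ne_zero.mpr Real.pi_ne_zero)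
  have : (x : ℂ) = y + 2 * n := mul_left_cancel₀ hIπ (by linear_combination hn)
  exact ⟨n, by exact_mod_cast this⟩

theorem exists_int_of_exp_persymmetric_rows_eq_single_rev {a b c d : ℝ} (hc : c ≠ 0) {γ : ℂ}
    (hU : ∀ i, NormedSpace.exp ((I * Real.pi) •
      !![(a : ℂ), c, 0, 0; (c : ℂ), b, d, 0; 0, (d : ℂ), b, c; 0, 0, (c : ℂ), a]) i =
        Pi.single i.rev γ) :
    ∃ n k m : ℤ, ((a - b - d) / 2) ^ 2 + c ^ 2 = n ^ 2 ∧
      ((a - b + d) / 2) ^ 2 + c ^ 2 = k ^ 2 ∧ d = 1 + 2 * m - n + k := by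
  -- `ε = 1` gives the symmetric eigenvectors, `ε = -1` the antisymmetric ones.
  have hroot (ε : ℝ) (hε : ε ^ 2 = 1) (x : ℝ) (hx : (x - a) * (x - (b + ε * d)) = c ^ 2) :
      cexp (I * Real.pi * x) = ε * γ := by
    have hεC : (ε : ℂ) ^ 2 = 1 := by exact_mod_cast hε
    refine exp_eq_of_mulVec_eq_smul_of_rows_eq_single_rev hU
      (v := ![c, x - a, ε * (x - a), ε * c]) ?_ ?_ ?_
    · rw [smul_mulVec, persymmetric_mulVec_eigenvector hεC (by exact_mod_cast hx), smul_smul]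
    · ext i
      fin_cases i <;> simp [Fin.rev]
      · linear_combination -((x : ℂ) - a) * hεC
      · linear_combination -(c : ℂ) * hεC
    · intro h0
      simpa [hc] using congrFun h0 0
  have hquad (s e : ℝ) (he : e ^ 2 = (a - s) ^ 2 + 4 * c ^ 2) :
      ((a + s + e) / 2 - a) * ((a + s + e) / 2 - s) = c ^ 2 := by
    linear_combination he / 4
  obtain ⟨E, hE⟩ : ∃ E : ℝ, E ^ 2 = (a - (b + 1 * d)) ^ 2 + 4 * c ^ 2 :=
    ⟨_, Real.sq_sqrt (by positivity)⟩
  obtain ⟨F, hF⟩ : ∃ F : ℝ, F ^ 2 = (a - (b + -1 * d)) ^ 2 + 4 * c ^ 2 :=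
    ⟨_, Real.sq_sqrt (by positivity)⟩
  have hμ₁ := hroot 1 (by norm_num) _ (hquad _ E hE)
  have hμ₂ := hroot 1 (by norm_num) _ (hquad _ (-E) (by rw [neg_sq, hE]))
  have hν₁ := hroot (-1) (by norm_num) _ (hquad _ F hF)
  have hν₂ := hroot (-1) (by norm_num) _ (hquad _ (-F) (by rw [neg_sq, hF]))
  obtain ⟨n, hn⟩ := exists_int_of_exp_I_pi_mul_eq (hμ₁.trans hμ₂.symm)
  obtain ⟨k, hk⟩ := exists_int_of_exp_I_pi_mul_eq (hν₁.trans hν₂.symm)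
  obtain ⟨m, hm⟩ := exists_int_of_exp_I_pi_mul_eq (x := (a + (b + 1 * d) + E) / 2)
    (y := (a + (b + -1 * d) + F) / 2 + 1) (by
      rw [hμ₁, ofReal_add, mul_add, exp_add, hν₁, ofReal_one, mul_one, mul_comm I,
        exp_pi_mul_I]
      push_cast
      ring)
  refine ⟨n, k, m, ?_, ?_, ?_⟩
  · rw [show E = 2 * n by linarith] at hE
    linear_combination -hE / 4
  · rw [show F = 2 * k by linarith] at hF
    linear_combination -hF / 4
  · linarith

theorem pathHamiltonian_four_map_ofReal (q r : ℕ → ℝ) :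
    (pathHamiltonian 4 q r).map ((↑) : ℝ → ℂ) =
      !![(q 1 : ℂ), r 1, 0, 0; (r 1 : ℂ), q 2, r 2, 0;
        0, (r 2 : ℂ), q 3, r 3; 0, 0, (r 3 : ℂ), q 4] := by
  ext i j
  fin_cases i <;> fin_cases j <;> simp [pathHamiltonian]

theorem pathHamiltonian_isSymm (n : ℕ) (q r : ℕ → ℝ) : (pathHamiltonian n q r).IsSymm := by
  ext j k
  simp only [transpose_apply, pathHamiltonian, of_apply]
  split_ifs <;> first | rfl | (congr 1; omega)

theorem rows_eq_single_rev_of_norm_corner_eq_one {q r : ℕ → ℝ} (hr₁ : 0 < r 1)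
    (hr₃ : 0 < r 3) {U : Matrix (Fin 4) (Fin 4) ℂ} (hU : U ∈ unitaryGroup (Fin 4) ℂ)
    (hUs : U.IsSymm)
    (hAU : (pathHamiltonian 4 q r).map ((↑) : ℝ → ℂ) * U =
      U * (pathHamiltonian 4 q r).map (↑))
    (h : ‖U 0 3‖ = 1) :
    q 4 = q 1 ∧ r 3 = r 1 ∧ q 3 = q 2 ∧ ∀ i, U i = Pi.single i.rev (U 0 3) := by
  rw [pathHamiltonian_four_map_ofReal] at hAU
  have entry (i j : Fin 4) := congrFun (congrFun hAU i) j
  obtain ⟨row₀, row₃⟩ := hUs.rows_eq_single_of_norm_eq_one hU h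
  set γ := U 0 3
  clear_value γ
  have hγ : γ ≠ 0 := by rintro rfl; simp at h
  have u10 : U 1 0 = 0 := by rw [hUs.apply]; simp [row₀]
  have u11 : U 1 1 = 0 := by
    simpa [mul_apply, Fin.sum_univ_four, row₀, row₃, hr₁.ne'] using entry 0 1
  have u13 : U 1 3 = 0 := by rw [← hUs.apply]; simp [row₃]
  have e02 : (r 1 : ℂ) * U 1 2 = γ * r 3 := by
    simpa [mul_apply, Fin.sum_univ_four, row₀, row₃] using entry 0 2
  have hq₄ : q 4 = q 1 := by
    have e03 : q 1 * γ = γ * q 4 := by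
      simpa [mul_apply, Fin.sum_univ_four, row₀, row₃, u13] using entry 0 3
    have : (q 4 : ℂ) = q 1 := mul_left_cancel₀ hγ (by linear_combination -e03)
    exact_mod_cast this
  have norm₁₂ : ‖U 1 2‖ = 1 := by
    have := sum_norm_sq_row_eq_one hU 1
    simp only [Fin.sum_univ_four, u10, u11, u13, norm_zero] at this
    exact (pow_eq_one_iff_of_nonneg (norm_nonneg _) two_ne_zero).mp (by linarith)
  have hr₃₁ : r 3 = r 1 := by
    have := congrArg norm e02
    simp only [norm_mul, Complex.norm_real, Real.norm_eq_abs, abs_of_pos hr₁, abs_of_pos hr₃,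
      norm₁₂, h] at this
    linarith
  have u12 : U 1 2 = γ := mul_left_cancel₀ (Complex.ofReal_ne_zero.mpr hr₁.ne')
    (by rw [e02, hr₃₁, mul_comm])
  obtain ⟨row₁, row₂⟩ := hUs.rows_eq_single_of_norm_eq_one hU norm₁₂
  rw [u12] at row₁ row₂
  have hq₃ : q 3 = q 2 := by
    have e12 : q 2 * γ = γ * q 3 := by
      simpa [mul_apply, Fin.sum_univ_four, row₀, row₁, row₂, row₃] using entry 1 2
    have : (q 3 : ℂ) = q 2 := mul_left_cancel₀ hγ (by linear_combination -e12)
    exact_mod_cast this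
  refine ⟨hq₄, hr₃₁, hq₃, fun i => ?_⟩
  fin_cases i
  exacts [row₀, row₁, row₂, row₃]

/-- A weighted path on 4 vertices with potentials, all of whose edge weights and
potentials are rational, admits no PST from vertex 1 to vertex 4 at time `π`. -/
theorem no_pst_rational_path_four (q r : ℕ → ℝ)
    (hr : ∀ j, 1 ≤ j → j ≤ 3 → 0 < r j)
    (hrrat : ∀ j, 1 ≤ j → j ≤ 3 → ∃ a : ℚ, r j = (a : ℝ))
    (hqrat : ∀ j, 1 ≤ j → j ≤ 4 → ∃ a : ℚ, q j = (a : ℝ)) :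
    transferAmp 4 (pathHamiltonian 4 q r) Real.pi 0 3 < 1 := by
  have hr₁ := hr 1 le_rfl (by norm_num)
  have hH := pathHamiltonian_isSymm 4 q r
  set A := (pathHamiltonian 4 q r).map ((↑) : ℝ → ℂ)
  have hU := exp_I_mul_smul_mem_unitaryGroup
    ((isHermitian_iff_isSymm.mpr hH).map _ fun x => (conj_ofReal x).symm) Real.pi
  have hUs : (NormedSpace.exp ((I * Real.pi) • A)).IsSymm := ((hH.map _).smul _).exp
  have hAU := ((Commute.refl A).smul_right (I * Real.pi)).exp_right.eq
  refine (entry_norm_bound_of_unitary hU 0 3).lt_of_ne fun hpst => ?_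
  obtain ⟨hq₄, hr₃, hq₃, hrows⟩ := rows_eq_single_rev_of_norm_corner_eq_one
    hr₁ (hr 3 (by norm_num) le_rfl) hU hUs hAU hpst
  rw [pathHamiltonian_four_map_ofReal, hq₄, hq₃, hr₃] at hrows
  obtain ⟨n, k, m, hn, hk, hd⟩ :=
    exists_int_of_exp_persymmetric_rows_eq_single_rev hr₁.ne' hrows
  obtain ⟨a, ha⟩ := hqrat 1 le_rfl (by norm_num)
  obtain ⟨b, hb⟩ := hqrat 2 (by norm_num) (by norm_num)
  obtain ⟨c, hc⟩ := hrrat 1 le_rfl (by norm_num)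
  rw [ha, hb, hc, show r 2 = ((1 + 2 * m - n + k : ℤ) : ℝ) by push_cast; exact hd] at hn hk
  have hpar := Int.even_add_add_of_sq_add_sq (u := a - b) (y := c) (by exact_mod_cast hn)
    (by exact_mod_cast hk)
  exact Int.not_even_two_mul_add_one (m + k) (by convert hpar using 1; ring)
end
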